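/- arXiv:1512.01937 — 11 statements merged into one kernel-verified Lean document; each statement's English description precedes it below -/
import Mathlib

section
/- Let X be a topological space, (U_i : i ∈ I) a locally finite family of cozero subsets of X, and (F_i : i ∈ I) a family of zero subsets of X with F_i ⊆ U_i for every i ∈ I. Then the union F = ⋃_{i∈I} F_i is a zero set in X. -/
open Set Filter Topology

def IsZeroSet {X : Type*} [TopologicalSpace X] (A : Set X) : Prop :=
  ∃ f : X → ℝ, Continuous f ∧ A = f ⁻¹' {0}

def IsCozeroSet {X : Type*} [TopologicalSpace X] (A : Set X) : Prop := IsZeroSet Aᶜ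

def IsDiscreteFamily {X : Type*} [TopologicalSpace X] {ι : Type*} (U : ι → Set X) : Prop :=
  ∀ x : X, ∃ V ∈ 𝓝 x, {i | (U i ∩ V).Nonempty}.Subsingleton

def IsSFDFamily {X : Type*} [TopologicalSpace X] {ι : Type*} (A : ι → Set X) : Prop :=
  ∃ U : ι → Set X, IsDiscreteFamily U ∧ (∀ i, IsCozeroSet (U i)) ∧ ∀ i, closure (A i) ⊆ U i

def IsSFDSetFamily {X : Type*} [TopologicalSpace X] (𝓐 : Set (Set X)) : Prop :=
  IsSFDFamily (fun A : 𝓐 => (A : Set X))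

def IsBaseFor {X Y : Type*} [TopologicalSpace X] [TopologicalSpace Y]
    (𝓑 : Set (Set X)) (f : X → Y) : Prop :=
  ∀ V : Set Y, IsOpen V → ∃ 𝓢 ⊆ 𝓑, f ⁻¹' V = ⋃₀ 𝓢

def FunctionallyFSigma {X : Type*} [TopologicalSpace X] (A : Set X) : Prop :=
  ∃ F : ℕ → Set X, (∀ n, IsZeroSet (F n)) ∧ A = ⋃ n, F n

def MemK1 {X Y : Type*} [TopologicalSpace X] [TopologicalSpace Y] (f : X → Y) : Prop :=
  ∀ V : Set Y, IsOpen V → FunctionallyFSigma (f ⁻¹' V)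

def MemB1 {X Y : Type*} [TopologicalSpace X] [TopologicalSpace Y] (f : X → Y) : Prop :=
  ∃ g : ℕ → X → Y, (∀ n, Continuous (g n)) ∧
    ∀ x, Tendsto (fun n => g n x) atTop (𝓝 (f x))

def MemSigmaF {X Y : Type*} [TopologicalSpace X] [TopologicalSpace Y] (f : X → Y) : Prop :=
  ∃ 𝓑 : ℕ → Set (Set X), (∀ n, IsSFDSetFamily (𝓑 n)) ∧ IsBaseFor (⋃ n, 𝓑 n) f

def MemSigmaF0 {X Y : Type*} [TopologicalSpace X] [TopologicalSpace Y] (f : X → Y) : Prop :=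
  ∃ 𝓑 : ℕ → Set (Set X), (∀ n, IsSFDSetFamily (𝓑 n)) ∧
    (∀ n, ∀ A ∈ 𝓑 n, IsZeroSet A) ∧ IsBaseFor (⋃ n, 𝓑 n) f

def CompletelySeparatedSets {X : Type*} [TopologicalSpace X] (A B : Set X) : Prop :=
  ∃ h : X → ℝ, Continuous h ∧ (∀ x, h x ∈ Icc (0:ℝ) 1) ∧
    (∀ x ∈ A, h x = 0) ∧ ∀ x ∈ B, h x = 1

def StronglyZeroDimensional (X : Type*) [TopologicalSpace X] : Prop :=
  ∀ A B : Set X, CompletelySeparatedSets A B → ∃ U : Set X, IsClopen U ∧ A ⊆ U ∧ U ⊆ Bᶜ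

def IsCSet {X : Type*} [TopologicalSpace X] (A : Set X) : Prop :=
  ∃ U : ℕ → Set X, (∀ n, IsClopen (U n)) ∧ A = ⋂ n, U n

def IsCSigmaSet {X : Type*} [TopologicalSpace X] (A : Set X) : Prop :=
  ∃ C : ℕ → Set X, (∀ n, IsCSet (C n)) ∧ A = ⋃ n, C n

def AlmostStronglyZeroDimensional (X : Type*) [TopologicalSpace X] : Prop :=
  ∀ A : Set X, IsZeroSet A → IsCSigmaSet A

def CountablyCompactIn {X : Type*} [TopologicalSpace X] (F : Set X) : Prop :=
  ∀ U : ℕ → Set X, (∀ n, IsOpen (U n)) → F ⊆ ⋃ n, U n →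
    ∃ s : Finset ℕ, F ⊆ ⋃ n ∈ s, U n

/-! If `F = f⁻¹{0}` lies in `U = X \ g⁻¹{0}`, then `f² / (f² + g²)` vanishes exactly on `F` and
equals `1` off `U`. Over a locally finite family these functions have a locally finite family of
multiplicative supports, so their pointwise product is continuous, and it vanishes exactly on
`⋃ i, F i`. -/

open Function

section
variable {X : Type*} [TopologicalSpace X]

theorem IsZeroSet.exists_continuous_mulSupport_subset {F U : Set X} (hF : IsZeroSet F)
    (hU : IsCozeroSet U) (hFU : F ⊆ U) :
    ∃ p : X → ℝ, Continuous p ∧ F = p ⁻¹' {0} ∧ mulSupport p ⊆ U := by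
  obtain ⟨f, hf, rfl⟩ := hF
  obtain ⟨g, hg, hUg⟩ := hU
  have hg_of_f : ∀ x, f x = 0 → g x ≠ 0 := fun x hfx hgx =>
    (show x ∈ Uᶜ from hUg ▸ hgx) (hFU hfx)
  have hden : ∀ x, f x ^ 2 + g x ^ 2 ≠ 0 := by
    intro x
    by_cases hfx : f x = 0
    · have := hg_of_f x hfx
      positivity
    · positivity
  refine ⟨fun x => f x ^ 2 / (f x ^ 2 + g x ^ 2),
    (hf.pow 2).div ((hf.pow 2).add (hg.pow 2)) hden, ?_, ?_⟩
  · ext x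
    simp [hden x]
  · intro x hx
    by_contra hxU
    have hgx : g x = 0 := show x ∈ g ⁻¹' {0} from hUg ▸ hxU
    have hfx : f x ≠ 0 := fun hfx => hg_of_f x hfx hgx
    exact hx (by simp [hgx, hfx])

theorem isZeroSet_iUnion_preimage_zero {ι : Type*} {p : ι → X → ℝ} (hp : ∀ i, Continuous (p i))
    (hfin : LocallyFinite fun i => mulSupport (p i)) : IsZeroSet (⋃ i, p i ⁻¹' {0}) := by
  refine ⟨fun x => ∏ᶠ i, p i x, continuous_finprod hp hfin, ?_⟩
  ext x
  simp only [mem_iUnion, mem_preimage, mem_singleton_iff]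
  constructor
  · rintro ⟨i, hi⟩
    exact finprod_eq_zero (fun i => p i x) i hi (hfin.point_finite x)
  · intro h
    by_contra! hne
    exact finprod_ne_zero hne h

end

theorem stmt0 {X : Type*} [TopologicalSpace X] {ι : Type*} (U F : ι → Set X)
    (hU : LocallyFinite U) (hUc : ∀ i, IsCozeroSet (U i))
    (hF : ∀ i, IsZeroSet (F i)) (hFU : ∀ i, F i ⊆ U i) :
    IsZeroSet (⋃ i, F i) := by
  choose p hp hFp hpU using fun i => (hF i).exists_continuous_mulSupport_subset (hUc i) (hFU i)
  rw [iUnion_congr hFp]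
  exact isZeroSet_iUnion_preimage_zero hp (hU.subset hpU)
end

section
/- A union of a strongly functionally discrete family of zero sets in a topological space is a zero set. -/
open Set Filter Topology

/-
A zero set `F ⊆ U` of a cozero set `U` is the zero set of a continuous `h` with `h = 1` off `U`.
Taking such an `h i` for every member of the family, the product `∏ᶠ i, h i` is continuous
because a discrete family is locally finite, and it vanishes exactly on `⋃ i, F i`.
-/

lemma IsZeroSet.exists_mulSupport_subset {X : Type*} [TopologicalSpace X] {F U : Set X}
    (hF : IsZeroSet F) (hU : IsCozeroSet U) (hFU : F ⊆ U) :
    ∃ h : X → ℝ, Continuous h ∧ F = h ⁻¹' {0} ∧ Function.mulSupport h ⊆ U := by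
  obtain ⟨f, hf, rfl⟩ := hF
  obtain ⟨u, hu, hUu⟩ := hU
  have hmemU : ∀ x, x ∈ U ↔ u x ≠ 0 := fun x => by
    rw [← not_iff_not, not_not, ← mem_compl_iff, hUu, mem_preimage, mem_singleton_iff]
  have hden : ∀ x, |f x| + |u x| ≠ 0 := fun x h0 => by
    obtain ⟨hfx, hux⟩ := (add_eq_zero_iff_of_nonneg (abs_nonneg _) (abs_nonneg _)).1 h0
    exact (hmemU x).1 (hFU (abs_eq_zero.1 hfx)) (abs_eq_zero.1 hux)
  refine ⟨fun x => |f x| / (|f x| + |u x|),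
    hf.abs.div (hf.abs.add hu.abs) hden, ?_, fun x hx => ?_⟩
  · ext x
    simp [div_eq_zero_iff, hden x]
  · by_contra hxU
    have hux : u x = 0 := not_not.1 (mt (hmemU x).2 hxU)
    have hfx : f x ≠ 0 := fun hfx => hxU (hFU hfx)
    exact hx (by simp [hux, hfx])

lemma IsDiscreteFamily.locallyFinite {X : Type*} [TopologicalSpace X] {ι : Type*}
    {U : ι → Set X} (hU : IsDiscreteFamily U) : LocallyFinite U := fun x =>
  let ⟨V, hV, hsub⟩ := hU x
  ⟨V, hV, hsub.finite⟩

lemma finprod_eq_zero_iff {ι M₀ : Type*} [CommMonoidWithZero M₀] [Nontrivial M₀]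
    [NoZeroDivisors M₀] {f : ι → M₀} (hf : (Function.mulSupport f).Finite) :
    ∏ᶠ i, f i = 0 ↔ ∃ i, f i = 0 := by
  refine ⟨fun h => ?_, fun ⟨i, hi⟩ => finprod_eq_zero f i hi hf⟩
  by_contra! hne
  exact finprod_ne_zero hne h

theorem isZeroSet_iUnion_of_locallyFinite {X : Type*} [TopologicalSpace X] {ι : Type*}
    {F U : ι → Set X} (hU : LocallyFinite U) (hUcoz : ∀ i, IsCozeroSet (U i))
    (hF : ∀ i, IsZeroSet (F i)) (hFU : ∀ i, F i ⊆ U i) :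
    IsZeroSet (⋃ i, F i) := by
  choose h hcont hzero hsupp using fun i => (hF i).exists_mulSupport_subset (hUcoz i) (hFU i)
  have hfin : LocallyFinite fun i => Function.mulSupport (h i) := hU.subset hsupp
  refine ⟨fun x => ∏ᶠ i, h i x, continuous_finprod hcont hfin, ?_⟩
  ext x
  have hxfin : (Function.mulSupport fun i => h i x).Finite :=
    (hfin.point_finite x).subset fun i hi => hi
  simp [finprod_eq_zero_iff hxfin, hzero]

theorem stmt1 {X : Type*} [TopologicalSpace X] {ι : Type*} (F : ι → Set X)
    (hsfd : IsSFDFamily F) (hF : ∀ i, IsZeroSet (F i)) :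
    IsZeroSet (⋃ i, F i) := by
  obtain ⟨U, hdisc, hcoz, hcl⟩ := hsfd
  exact isZeroSet_iUnion_of_locallyFinite hdisc.locallyFinite hcoz hF
    fun i => subset_closure.trans (hcl i)
end

section
/- Let X be a topological space and let C₁ and C₂ be disjoint C-subsets of X. Then there exists a clopen set G in X such that C₁ ⊆ G ⊆ X \ C₂. -/
open Set Filter Topology

/- Disjoint C-sets have complements `⋃ₙ (V n)ᶜ` and `⋃ₙ (U n)ᶜ` covering `X`: two countable unions
of clopen sets. Making such a cover disjoint (`disjointed`) turns it into a partition of `X` into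
clopen pieces, each lying in `(U n)ᶜ` or in `(V n)ᶜ`; the union of the pieces of the second kind
is clopen, since its complement is the union of the others. -/

section Reduction

open Function

variable {X ι : Type*} [TopologicalSpace X]

theorem isClopen_iUnion_inter_of_pairwise_disjoint {d s : ι → Set X} (hd : ∀ i, IsOpen (d i))
    (hdisj : Pairwise (Disjoint on d)) (hcover : ⋃ i, d i = univ) (hs : ∀ i, IsClopen (s i)) :
    IsClopen (⋃ i, d i ∩ s i) := by
  have hcompl : (⋃ i, d i ∩ s i)ᶜ = ⋃ i, d i \ s i := by
    ext x
    obtain ⟨i, hi⟩ := iUnion_eq_univ_iff.1 hcover x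
    have hunique : ∀ j, x ∈ d j → j = i := fun j hj =>
      hdisj.eq (not_disjoint_iff.2 ⟨x, hj, hi⟩)
    simp only [mem_compl_iff, mem_iUnion, mem_inter_iff, Set.mem_sdiff, not_exists, not_and]
    constructor
    · exact fun h => ⟨i, hi, h i hi⟩
    · rintro ⟨j, hj, hxs⟩ k hk
      obtain rfl := hunique j hj
      obtain rfl := hunique k hk
      exact hxs
  refine ⟨?_, isOpen_iUnion fun i => (hd i).inter (hs i).isOpen⟩
  rw [← isOpen_compl_iff, hcompl]
  exact isOpen_iUnion fun i => (hd i).sdiff (hs i).isClosed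

theorem exists_isClopen_subset_iUnion_compl_subset_iUnion [LinearOrder ι]
    [LocallyFiniteOrderBot ι] {a b : ι → Set X} (ha : ∀ i, IsClopen (a i))
    (hb : ∀ i, IsClopen (b i)) (hcover : (⋃ i, a i) ∪ ⋃ i, b i = univ) :
    ∃ G, IsClopen G ∧ G ⊆ ⋃ i, a i ∧ Gᶜ ⊆ ⋃ i, b i := by
  set d := disjointed fun i => a i ∪ b i
  have hd : ∀ i, IsClopen (d i) := fun i =>
    disjointedRec (p := IsClopen) (fun _ j ht => ht.diff ((ha j).union (hb j)))
      ((ha i).union (hb i))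
  have hdcover : ⋃ i, d i = univ := by rw [iUnion_disjointed, iUnion_union_distrib, hcover]
  refine ⟨⋃ i, d i ∩ a i,
    isClopen_iUnion_inter_of_pairwise_disjoint (fun i => (hd i).isOpen) (disjoint_disjointed _)
      hdcover ha, iUnion_mono fun i => inter_subset_right, fun x hx => ?_⟩
  obtain ⟨i, hi⟩ := iUnion_eq_univ_iff.1 hdcover x
  have hxa : x ∉ a i := fun hxa => hx (mem_iUnion.2 ⟨i, hi, hxa⟩)
  exact mem_iUnion.2 ⟨i, (disjointed_subset _ i hi).resolve_left hxa⟩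

end Reduction

theorem IsCSet.compl_eq_iUnion {X : Type*} [TopologicalSpace X] {C : Set X} (hC : IsCSet C) :
    ∃ U : ℕ → Set X, (∀ n, IsClopen (U n)) ∧ Cᶜ = ⋃ n, U n := by
  obtain ⟨U, hU, rfl⟩ := hC
  exact ⟨fun n => (U n)ᶜ, fun n => (hU n).compl, compl_iInter U⟩

theorem stmt2 {X : Type*} [TopologicalSpace X] (C₁ C₂ : Set X)
    (h1 : IsCSet C₁) (h2 : IsCSet C₂) (hd : Disjoint C₁ C₂) :
    ∃ G : Set X, IsClopen G ∧ C₁ ⊆ G ∧ G ⊆ C₂ᶜ := by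
  obtain ⟨U, hU, hC₁⟩ := h1.compl_eq_iUnion
  obtain ⟨V, hV, hC₂⟩ := h2.compl_eq_iUnion
  have hcover : (⋃ n, V n) ∪ ⋃ n, U n = univ := by
    rw [← hC₁, ← hC₂, ← compl_inter, hd.symm.inter_eq, compl_empty]
  obtain ⟨G, hG, hGV, hGU⟩ := exists_isClopen_subset_iUnion_compl_subset_iUnion hV hU hcover
  exact ⟨G, hG, compl_subset_compl.1 (hC₁ ▸ hGU), hC₂ ▸ hGV⟩
end

section
/- Let X be a topological space and C₁, …, C_n pairwise disjoint C-subsets of X. Then there exist pairwise disjoint clopen sets G₁, …, G_n in X such that X = G₁ ∪ ⋯ ∪ G_n and C_i ⊆ G_i for every i = 1, …, n. -/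
open Set Filter Topology

/-!
Two disjoint C-sets `⋂ uₙ` and `⋂ vₙ` (with `uₙ`, `vₙ` decreasing clopen) are separated by the
clopen set of points that leave the sequence `v` strictly before they leave `u`: it is a countable
union of clopen sets, and so is its complement. Applying this to all pairs gives, for each `i`, a
clopen `Hᵢ ⊇ Cᵢ` missing every other `Cⱼ`; ordering the indices, `Gᵢ := Hᵢ \ ⋃_{j < i} Hⱼ`, with
the last `H` replaced by the whole space, is the required partition.
-/

open Function

section

variable {X : Type*} [TopologicalSpace X]

theorem IsCSet.exists_antitone {A : Set X} (hA : IsCSet A) :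
    ∃ U : ℕ → Set X, (∀ n, IsClopen (U n)) ∧ Antitone U ∧ A = ⋂ n, U n := by
  obtain ⟨U, hU, rfl⟩ := hA
  refine ⟨fun n => ⋂ m ≤ n, U m, fun n => (finite_Iic n).isClopen_biInter fun m _ => hU m,
    fun _ _ hmn => biInter_mono (fun m hm => le_trans hm hmn) fun _ _ => subset_rfl, ?_⟩
  exact biInter_le_eq_iInter.symm

theorem exists_isClopen_separating_of_antitone {u v : ℕ → Set X} (hu : ∀ n, IsClopen (u n))
    (hv : ∀ n, IsClopen (v n)) (hu_anti : Antitone u) (hv_anti : Antitone v)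
    (huv : Disjoint (⋂ n, u n) (⋂ n, v n)) :
    ∃ G : Set X, IsClopen G ∧ ⋂ n, u n ⊆ G ∧ Disjoint G (⋂ n, v n) := by
  set G := ⋃ n, u n \ v n
  -- the points that leave `u` no later than they leave `v`
  set H := (u 0)ᶜ ∪ ⋃ n, v n \ u (n + 1)
  have hGH : Disjoint G H := by
    simp only [G, H, disjoint_union_right, disjoint_iUnion_left, disjoint_iUnion_right]
    refine ⟨fun n => disjoint_compl_right.mono_left (sdiff_subset.trans (hu_anti n.zero_le)),
      fun m n => ?_⟩
    rcases lt_or_ge m n with hmn | hnm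
    · exact disjoint_sdiff_right.mono_left (sdiff_subset.trans (hu_anti hmn))
    · exact disjoint_sdiff_left.mono_right (sdiff_subset.trans (hv_anti hnm))
  have hcover : ∀ n, (u n ∩ v n)ᶜ ⊆ G ∪ H := by
    intro n
    induction n with
    | zero =>
      intro x hx
      by_cases hxu : x ∈ u 0
      · exact Or.inl (mem_iUnion.2 ⟨0, hxu, fun hxv => hx ⟨hxu, hxv⟩⟩)
      · exact Or.inr (Or.inl hxu)
    | succ n ih =>
      intro x hx
      by_cases hxn : x ∈ u n ∩ v n
      · by_cases hxu : x ∈ u (n + 1)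
        · exact Or.inl (mem_iUnion.2 ⟨n + 1, hxu, fun hxv => hx ⟨hxu, hxv⟩⟩)
        · exact Or.inr (Or.inr (mem_iUnion.2 ⟨n, hxn.2, hxu⟩))
      · exact ih hxn
  have hGc : Gᶜ = H := by
    refine Subset.antisymm (fun x hxG => ?_) fun x hxH hxG => hGH.ne_of_mem hxG hxH rfl
    obtain ⟨n, hn⟩ : ∃ n, x ∉ u n ∩ v n := by
      by_contra! hx
      exact huv.ne_of_mem (mem_iInter.2 fun n => (hx n).1) (mem_iInter.2 fun n => (hx n).2) rfl
    exact (hcover n hn).resolve_left hxG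
  have hH : IsOpen H := ((hu 0).compl.isOpen).union
    (isOpen_iUnion fun n => (hv n).isOpen.inter (hu (n + 1)).compl.isOpen)
  refine ⟨G, ⟨isOpen_compl_iff.1 (hGc ▸ hH), isOpen_iUnion fun n => ((hu n).diff (hv n)).isOpen⟩,
    fun x hx => ?_,
    disjoint_iUnion_left.2 fun n => disjoint_sdiff_left.mono_right (iInter_subset _ n)⟩
  obtain ⟨n, hn⟩ : ∃ n, x ∉ v n := by
    by_contra! hxv
    exact huv.ne_of_mem hx (mem_iInter.2 hxv) rfl
  exact mem_iUnion.2 ⟨n, mem_iInter.1 hx n, hn⟩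

theorem IsCSet.exists_isClopen_separating {C D : Set X} (hC : IsCSet C) (hD : IsCSet D)
    (h : Disjoint C D) : ∃ G : Set X, IsClopen G ∧ C ⊆ G ∧ Disjoint G D := by
  obtain ⟨u, hu, hu_anti, rfl⟩ := hC.exists_antitone
  obtain ⟨v, hv, hv_anti, rfl⟩ := hD.exists_antitone
  exact exists_isClopen_separating_of_antitone hu hv hu_anti hv_anti h

theorem exists_isClopen_isolating {ι : Type*} [Finite ι] {C : ι → Set X}
    (hC : ∀ i, IsCSet (C i)) (hd : Pairwise (Disjoint on C)) :
    ∃ H : ι → Set X, (∀ i, IsClopen (H i)) ∧ (∀ i, C i ⊆ H i) ∧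
      ∀ i j, i ≠ j → Disjoint (H i) (C j) := by
  choose T hT hCT hTC using fun i j (hij : i ≠ j) =>
    (hC i).exists_isClopen_separating (hC j) (hd hij)
  refine ⟨fun i => ⋂ j, ⋂ hij : i ≠ j, T i j hij,
    fun i => isClopen_iInter_of_finite fun j => isClopen_iInter_of_finite fun hij => hT i j hij,
    fun i => subset_iInter₂ fun j hij => hCT i j hij, fun i j hij => ?_⟩
  exact (hTC i j hij).mono_left (iInter₂_subset j hij)

theorem exists_isClopen_partition_of_isolating {ι : Type*} [LinearOrder ι]
    [LocallyFiniteOrderBot ι] [OrderTop ι] {C H : ι → Set X} (hH : ∀ i, IsClopen (H i))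
    (hCH : ∀ i, C i ⊆ H i) (hHC : ∀ i j, i ≠ j → Disjoint (H i) (C j)) :
    ∃ G : ι → Set X, (∀ i, IsClopen (G i)) ∧ Pairwise (Disjoint on G) ∧
      (⋃ i, G i) = univ ∧ ∀ i, C i ⊆ G i := by
  set f := update H ⊤ univ
  have hf_top : f ⊤ = univ := update_self ..
  have hf_ne : ∀ i ≠ ⊤, f i = H i := fun i hi => update_of_ne hi ..
  have hf : ∀ i, IsClopen (f i) := by
    intro i
    rcases eq_or_ne i ⊤ with rfl | hi
    · exact hf_top ▸ isClopen_univ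
    · exact hf_ne i hi ▸ hH i
  refine ⟨disjointed f, fun i => disjointedRec (fun _ _ ht => ht.diff (hf _)) (hf i),
    disjoint_disjointed f, ?_, fun i => ?_⟩
  · rw [iUnion_disjointed, eq_univ_iff_forall]
    exact fun x => mem_iUnion.2 ⟨⊤, hf_top ▸ mem_univ x⟩
  · rw [disjointed_eq_inter_compl]
    refine subset_inter ?_ (subset_iInter₂ fun j hji => ?_)
    · rcases eq_or_ne i ⊤ with rfl | hi
      · exact hf_top ▸ subset_univ _
      · exact hf_ne i hi ▸ hCH i
    · rw [hf_ne j (hji.trans_le le_top).ne]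
      exact subset_compl_comm.1 (hHC j i hji.ne).subset_compl_right

end

theorem stmt3 {X : Type*} [TopologicalSpace X] (n : ℕ) (hn : 0 < n) (C : Fin n → Set X)
    (hC : ∀ i, IsCSet (C i)) (hd : Pairwise (Function.onFun Disjoint C)) :
    ∃ G : Fin n → Set X, (∀ i, IsClopen (G i)) ∧ Pairwise (Function.onFun Disjoint G) ∧
      (⋃ i, G i) = Set.univ ∧ ∀ i, C i ⊆ G i := by
  obtain ⟨m, rfl⟩ := Nat.exists_eq_add_one_of_ne_zero hn.ne'
  obtain ⟨H, hH, hCH, hHC⟩ := exists_isClopen_isolating hC hd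
  exact exists_isClopen_partition_of_isolating hH hCH hHC
end

section
/- Every almost strongly zero-dimensional completely regular (Tychonoff) space X is totally separated, i.e., any two distinct points of X can be separated by a clopen set. -/
open Set Filter Topology

/-! A point `x ≠ y` lies in a zero set missing `y` by complete regularity. By assumption that zero
set is a countable union of countable intersections of clopen sets, so one of these clopen sets
contains `x` but not `y`. -/

section

variable {X : Type*} [TopologicalSpace X]

theorem IsCSet.exists_isClopen_superset_notMem {A : Set X} (hA : IsCSet A) {y : X}
    (hy : y ∉ A) : ∃ G : Set X, IsClopen G ∧ A ⊆ G ∧ y ∉ G := by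
  obtain ⟨U, hU, rfl⟩ := hA
  obtain ⟨n, hn⟩ := not_forall.mp (mem_iInter.not.mp hy)
  exact ⟨U n, hU n, iInter_subset U n, hn⟩

theorem IsCSigmaSet.exists_isClopen_mem_notMem {A : Set X} (hA : IsCSigmaSet A) {x y : X}
    (hx : x ∈ A) (hy : y ∉ A) : ∃ G : Set X, IsClopen G ∧ x ∈ G ∧ y ∉ G := by
  obtain ⟨C, hC, rfl⟩ := hA
  obtain ⟨n, hxn⟩ := mem_iUnion.mp hx
  obtain ⟨G, hG, hCG, hyG⟩ :=
    (hC n).exists_isClopen_superset_notMem fun hyn => hy (mem_iUnion_of_mem n hyn)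
  exact ⟨G, hG, hCG hxn, hyG⟩

theorem CompletelyRegularSpace.exists_isZeroSet_mem_disjoint [CompletelyRegularSpace X]
    {K : Set X} (hK : IsClosed K) {x : X} (hx : x ∉ K) :
    ∃ A : Set X, IsZeroSet A ∧ x ∈ A ∧ Disjoint A K := by
  obtain ⟨f, hf, hfx, hfK⟩ := CompletelyRegularSpace.completely_regular x K hK hx
  refine ⟨(fun z => (f z : ℝ)) ⁻¹' {0}, ⟨_, continuous_subtype_val.comp hf, rfl⟩,
    by simp [hfx], ?_⟩
  refine disjoint_left.mpr fun z hz hzK => ?_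
  simp [hfK hzK] at hz

end

theorem stmt4 {X : Type*} [TopologicalSpace X] [CompletelyRegularSpace X] [T1Space X]
    (h : AlmostStronglyZeroDimensional X) :
    ∀ x y : X, x ≠ y → ∃ G : Set X, IsClopen G ∧ x ∈ G ∧ y ∉ G := by
  intro x y hxy
  obtain ⟨A, hA, hxA, hAy⟩ :=
    CompletelyRegularSpace.exists_isZeroSet_mem_disjoint isClosed_singleton hxy
  exact (h A hA).exists_isClopen_mem_notMem hxA (disjoint_singleton_right.mp hAy)
end

section
/- Let X be a topological space, F ⊆ X a countably compact C_σ-set, and C ⊆ X a C-set with F ∩ C = ∅. Then there exists a clopen set G in X such that F ⊆ G ⊆ X \ C. -/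
/-! The complement of a C-set is a countable union of clopen sets, which covers `F`;
countable compactness leaves a finite subcover, and its union is the clopen set sought. -/

open Set Filter Topology

theorem IsCSet.exists_isClopen_compl_eq_iUnion {X : Type*} [TopologicalSpace X] {C : Set X}
    (hC : IsCSet C) : ∃ V : ℕ → Set X, (∀ n, IsClopen (V n)) ∧ Cᶜ = ⋃ n, V n := by
  obtain ⟨U, hU, rfl⟩ := hC
  exact ⟨fun n => (U n)ᶜ, fun n => (hU n).compl, compl_iInter U⟩

theorem CountablyCompactIn.exists_isClopen_subset_iUnion {X : Type*} [TopologicalSpace X]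
    {F : Set X} (hF : CountablyCompactIn F) {V : ℕ → Set X} (hV : ∀ n, IsClopen (V n))
    (hFV : F ⊆ ⋃ n, V n) : ∃ G : Set X, IsClopen G ∧ F ⊆ G ∧ G ⊆ ⋃ n, V n := by
  obtain ⟨s, hs⟩ := hF V (fun n => (hV n).isOpen) hFV
  exact ⟨⋃ n ∈ s, V n, isClopen_biUnion_finset fun n _ => hV n, hs,
    iUnion₂_subset fun n _ => subset_iUnion V n⟩

theorem stmt5_general {X : Type*} [TopologicalSpace X] (F C : Set X)
    (hFc : CountablyCompactIn F) (hC : IsCSet C)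
    (hd : F ∩ C = ∅) :
    ∃ G : Set X, IsClopen G ∧ F ⊆ G ∧ G ⊆ Cᶜ := by
  obtain ⟨V, hV, hCV⟩ := hC.exists_isClopen_compl_eq_iUnion
  have hFC : F ⊆ Cᶜ := subset_compl_iff_disjoint_right.2 (disjoint_iff_inter_eq_empty.2 hd)
  rw [hCV] at hFC ⊢
  exact hFc.exists_isClopen_subset_iUnion hV hFC

theorem stmt5 {X : Type*} [TopologicalSpace X] (F C : Set X)
    (hF : IsCSigmaSet F) (hFc : CountablyCompactIn F) (hC : IsCSet C)
    (hd : F ∩ C = ∅) :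
    ∃ G : Set X, IsClopen G ∧ F ⊆ G ∧ G ⊆ Cᶜ :=
  stmt5_general F C hFc hC hd
end

section
/- Let X be a topological space and F, E ⊆ X disjoint countably compact C_σ-sets. Then there exists a clopen set G in X such that F ⊆ G ⊆ X \ E. -/
open Set Filter Topology

/-!
Countable compactness turns a countable clopen cover into a finite one, whose union is clopen.
Applied to `E` and the complements of the clopen sets cutting out a C-set `C` disjoint from `E`,
this separates each C-set piece of `F` from `E` by a clopen set; applied once more to `F` and these
clopen sets, it yields `G`.
-/

section

variable {X : Type*} [TopologicalSpace X]

theorem CountablyCompactIn.exists_isClopen_subset_of_subset_iUnion {K B : Set X} {V : ℕ → Set X}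
    (hK : CountablyCompactIn K) (hV : ∀ n, IsClopen (V n)) (hKV : K ⊆ ⋃ n, V n)
    (hVB : ∀ n, V n ⊆ B) : ∃ G : Set X, IsClopen G ∧ K ⊆ G ∧ G ⊆ B := by
  obtain ⟨s, hs⟩ := hK V (fun n => (hV n).isOpen) hKV
  exact ⟨⋃ n ∈ s, V n, isClopen_biUnion_finset fun n _ => hV n, hs,
    iUnion₂_subset fun n _ => hVB n⟩

theorem IsCSet.exists_isClopen_subset_compl {C E : Set X} (hC : IsCSet C)
    (hE : CountablyCompactIn E) (hd : Disjoint C E) :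
    ∃ V : Set X, IsClopen V ∧ C ⊆ V ∧ V ⊆ Eᶜ := by
  obtain ⟨U, hU, rfl⟩ := hC
  have hEU : E ⊆ ⋃ n, (U n)ᶜ := by
    rw [← compl_iInter]
    exact hd.subset_compl_left
  obtain ⟨W, hW, hEW, hWC⟩ := hE.exists_isClopen_subset_of_subset_iUnion
    (fun n => (hU n).compl) hEU fun n => compl_subset_compl.2 (iInter_subset U n)
  exact ⟨Wᶜ, hW.compl, subset_compl_comm.1 hWC, compl_subset_compl.2 hEW⟩

end

theorem stmt6_general {X : Type*} [TopologicalSpace X] (F E : Set X)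
    (hF : IsCSigmaSet F) (hFc : CountablyCompactIn F)
    (hEc : CountablyCompactIn E)
    (hd : Disjoint F E) :
    ∃ G : Set X, IsClopen G ∧ F ⊆ G ∧ G ⊆ Eᶜ := by
  obtain ⟨C, hC, rfl⟩ := hF
  choose V hV hCV hVE using fun n =>
    (hC n).exists_isClopen_subset_compl hEc (hd.mono_left (subset_iUnion C n))
  exact hFc.exists_isClopen_subset_of_subset_iUnion hV (iUnion_mono hCV) hVE

theorem stmt6 {X : Type*} [TopologicalSpace X] (F E : Set X)
    (hF : IsCSigmaSet F) (hFc : CountablyCompactIn F)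
    (hE : IsCSigmaSet E) (hEc : CountablyCompactIn E)
    (hd : Disjoint F E) :
    ∃ G : Set X, IsClopen G ∧ F ⊆ G ∧ G ⊆ Eᶜ :=
  stmt6_general F E hF hFc hEc hd
end

section
/- Let X be a countably compact topological space. Then X is almost strongly zero-dimensional if and only if X is strongly zero-dimensional. -/
open Set Filter Topology

/-
A zero set `Z = h⁻¹{0}` is closed, so in a countably compact space it is countably compact. If
`Z` is a countable union of C-sets, each C-set `⋂ₙ Uₙ` sitting inside the open set `h⁻¹(-∞, 1)`
already has a finite subintersection inside it, which is a clopen neighbourhood; countable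
compactness of `Z` then selects finitely many of these, and their union is a clopen set separating
`h⁻¹{0}` from `h⁻¹{1}`. Conversely, strong zero-dimensionality gives clopen sets `Uₙ` with
`f⁻¹{0} ⊆ Uₙ ⊆ {|f| < 1/(n+1)}`, so every zero set is even a C-set.
-/

section

variable {X : Type*} [TopologicalSpace X]

lemma CountablyCompactIn.of_isClosed (hX : CountablyCompactIn (univ : Set X)) {F : Set X}
    (hF : IsClosed F) : CountablyCompactIn F := by
  intro U hU hFU
  obtain ⟨s, hs⟩ := hX (fun n => U n ∪ Fᶜ) (fun n => (hU n).union hF.isOpen_compl) fun x _ => by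
    by_cases hx : x ∈ F
    · obtain ⟨n, hn⟩ := mem_iUnion.1 (hFU hx)
      exact mem_iUnion.2 ⟨n, Or.inl hn⟩
    · exact mem_iUnion.2 ⟨0, Or.inr hx⟩
  refine ⟨s, fun x hx => ?_⟩
  obtain ⟨n, hn, hxn | hxF⟩ := mem_iUnion₂.1 (hs (mem_univ x))
  · exact mem_iUnion₂.2 ⟨n, hn, hxn⟩
  · exact absurd hx hxF

lemma IsCSet.exists_isClopen_between (hX : CountablyCompactIn (univ : Set X)) {C O : Set X}
    (hC : IsCSet C) (hO : IsOpen O) (hCO : C ⊆ O) :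
    ∃ V, IsClopen V ∧ C ⊆ V ∧ V ⊆ O := by
  obtain ⟨U, hU, rfl⟩ := hC
  have hcover : Oᶜ ⊆ ⋃ n, (U n)ᶜ := by
    rw [← compl_iInter]
    exact compl_subset_compl.2 hCO
  obtain ⟨s, hs⟩ := hX.of_isClosed hO.isClosed_compl (fun n => (U n)ᶜ)
    (fun n => (hU n).compl.isOpen) hcover
  refine ⟨⋂ n ∈ s, U n, isClopen_biInter_finset fun n _ => hU n,
    fun x hx => mem_iInter₂.2 fun n _ => mem_iInter.1 hx n, fun x hx => ?_⟩
  by_contra hxO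
  obtain ⟨n, hn, hxn⟩ := mem_iUnion₂.1 (hs hxO)
  exact hxn (mem_iInter₂.1 hx n hn)

lemma IsCSigmaSet.exists_isClopen_between (hX : CountablyCompactIn (univ : Set X))
    {Z O : Set X} (hZ : IsCSigmaSet Z) (hZc : IsClosed Z) (hO : IsOpen O) (hZO : Z ⊆ O) :
    ∃ V, IsClopen V ∧ Z ⊆ V ∧ V ⊆ O := by
  obtain ⟨C, hC, rfl⟩ := hZ
  choose V hV hCV hVO using fun n =>
    (hC n).exists_isClopen_between hX hO ((subset_iUnion C n).trans hZO)
  obtain ⟨s, hs⟩ := hX.of_isClosed hZc V (fun n => (hV n).isOpen) (iUnion_mono hCV)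
  exact ⟨⋃ n ∈ s, V n, isClopen_biUnion_finset fun n _ => hV n, hs,
    iUnion₂_subset fun n _ => hVO n⟩

theorem AlmostStronglyZeroDimensional.stronglyZeroDimensional
    (hX : CountablyCompactIn (univ : Set X)) (hA : AlmostStronglyZeroDimensional X) :
    StronglyZeroDimensional X := by
  rintro A B ⟨h, hc, -, hA0, hB1⟩
  have hZ : IsZeroSet (h ⁻¹' {0}) := ⟨h, hc, rfl⟩
  obtain ⟨V, hV, hZV, hVO⟩ := (hA _ hZ).exists_isClopen_between hX
    (isClosed_singleton.preimage hc) (isOpen_Iio.preimage hc)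
    (preimage_mono (singleton_subset_iff.2 zero_lt_one))
  refine ⟨V, hV, fun x hx => hZV (hA0 x hx), fun x hxV hxB => ?_⟩
  have : h x < 1 := hVO hxV
  linarith [hB1 x hxB]

lemma completelySeparatedSets_zero_le_abs {f : X → ℝ} (hf : Continuous f) {ε : ℝ}
    (hε : 0 < ε) : CompletelySeparatedSets (f ⁻¹' {0}) {x | ε ≤ |f x|} := by
  refine ⟨fun x => min (|f x| / ε) 1, by fun_prop, fun x => ⟨by positivity, min_le_right _ _⟩,
    fun x hx => ?_, fun x hx => min_eq_right ?_⟩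
  · simp [show f x = 0 from hx]
  · exact (one_le_div hε).2 hx

lemma StronglyZeroDimensional.isCSet_of_isZeroSet (hS : StronglyZeroDimensional X) {A : Set X}
    (hA : IsZeroSet A) : IsCSet A := by
  obtain ⟨f, hf, rfl⟩ := hA
  choose U hU hAU hUB using fun n : ℕ =>
    hS _ _ (completelySeparatedSets_zero_le_abs hf (Nat.one_div_pos_of_nat (n := n)))
  refine ⟨U, hU, (subset_iInter hAU).antisymm fun x hx => ?_⟩
  have hsmall : ∀ n : ℕ, |f x| < 1 / (n + 1) := fun n => not_le.1 (hUB n (mem_iInter.1 hx n))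
  by_contra hne
  obtain ⟨n, hn⟩ := exists_nat_one_div_lt (abs_pos.2 hne)
  exact (hsmall n).not_gt hn

lemma IsCSet.isCSigmaSet {A : Set X} (hA : IsCSet A) : IsCSigmaSet A :=
  ⟨fun _ => A, fun _ => hA, (iUnion_const A).symm⟩

theorem StronglyZeroDimensional.almostStronglyZeroDimensional (hS : StronglyZeroDimensional X) :
    AlmostStronglyZeroDimensional X :=
  fun _ hA => (hS.isCSet_of_isZeroSet hA).isCSigmaSet

end

theorem stmt7 {X : Type*} [TopologicalSpace X]
    (hX : CountablyCompactIn (Set.univ : Set X)) :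
    AlmostStronglyZeroDimensional X ↔ StronglyZeroDimensional X :=
  ⟨AlmostStronglyZeroDimensional.stronglyZeroDimensional hX,
    StronglyZeroDimensional.almostStronglyZeroDimensional⟩
end

section
/- Let X be a topological space and Y a metrizable space. Then every mapping f : X → Y of the first Baire class (a pointwise limit of continuous maps X → Y) has a base consisting of zero sets which is a countable union of strongly functionally discrete families; that is, B₁(X,Y) ⊆ Σ₀^f(X,Y). -/
open Set Filter Topology

/-!
Fix a σ-discrete base of `Y` (Stone's theorem) and, for each basic set `V`, a continuous `φ`
with `V = {φ > 0}`. If `f = lim gₙ` pointwise, then `f x ∈ V` iff for some `k` and `n`,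
`φ (gⱼ x) ≥ 1/(k+1)` for all `j ≥ n`. For fixed `k, n` this condition cuts out a zero set of `X`
inside the closed set `{φ ∘ gₙ ≥ 1/(k+1)}`, so the sets obtained from one discrete level of the
base are enclosed by the discrete family of cozero sets `gₙ⁻¹' {φ > 1/(2(k+1))}`.
-/

section ZeroSets

variable {X Y : Type*} [TopologicalSpace X] [TopologicalSpace Y]

theorem IsClosed.isZeroSet [PerfectlyNormalSpace X] {A : Set X} (hA : IsClosed A) :
    IsZeroSet A := by
  obtain ⟨φ, hφ, -⟩ := perfectlyNormalSpace_iff_forall_isClosed_preimage_zero.1 ‹_› A hA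
  exact ⟨φ, φ.continuous, hφ⟩

theorem IsOpen.isCozeroSet [PerfectlyNormalSpace X] {U : Set X} (hU : IsOpen U) :
    IsCozeroSet U :=
  hU.isClosed_compl.isZeroSet

theorem IsZeroSet.preimage {A : Set Y} (hA : IsZeroSet A) {g : X → Y} (hg : Continuous g) :
    IsZeroSet (g ⁻¹' A) := by
  obtain ⟨φ, hφ, rfl⟩ := hA
  exact ⟨φ ∘ g, hφ.comp hg, rfl⟩

theorem IsCozeroSet.preimage {U : Set Y} (hU : IsCozeroSet U) {g : X → Y} (hg : Continuous g) :
    IsCozeroSet (g ⁻¹' U) :=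
  IsZeroSet.preimage hU hg

theorem IsOpen.exists_continuous_eq_setOf_pos [PerfectlyNormalSpace X] {U : Set X}
    (hU : IsOpen U) : ∃ φ : X → ℝ, Continuous φ ∧ U = {x | 0 < φ x} := by
  obtain ⟨φ, hφ, hφ01⟩ :=
    perfectlyNormalSpace_iff_forall_isClosed_preimage_zero.1 ‹_› _ hU.isClosed_compl
  refine ⟨φ, φ.continuous, ?_⟩
  ext x
  rw [← compl_compl U, hφ]
  simp [(hφ01 x).1.lt_iff_ne', eq_comm]

end ZeroSets

section DiscreteFamilies

variable {X Y : Type*} [TopologicalSpace X] [TopologicalSpace Y] {ι κ : Type*}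

theorem IsDiscreteFamily.mono {U W : ι → Set X} (hU : IsDiscreteFamily U)
    (hWU : ∀ i, W i ⊆ U i) : IsDiscreteFamily W := by
  intro x
  obtain ⟨V, hV, hsub⟩ := hU x
  exact ⟨V, hV, fun i hi j hj => hsub (hi.mono (inter_subset_inter_left _ (hWU i)))
    (hj.mono (inter_subset_inter_left _ (hWU j)))⟩

theorem IsDiscreteFamily.comp_injective {U : ι → Set X} (hU : IsDiscreteFamily U) {e : κ → ι}
    (he : Function.Injective e) : IsDiscreteFamily (U ∘ e) := by
  intro x
  obtain ⟨V, hV, hsub⟩ := hU x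
  exact ⟨V, hV, fun k hk k' hk' => he (hsub hk hk')⟩

theorem IsDiscreteFamily.preimage {U : ι → Set Y} (hU : IsDiscreteFamily U) {g : X → Y}
    (hg : Continuous g) : IsDiscreteFamily fun i => g ⁻¹' U i := by
  intro x
  obtain ⟨W, hW, hsub⟩ := hU (g x)
  refine ⟨g ⁻¹' W, hg.continuousAt.preimage_mem_nhds hW, fun i hi j hj => hsub ?_ ?_⟩
  · obtain ⟨z, hzU, hzW⟩ := hi
    exact ⟨g z, hzU, hzW⟩
  · obtain ⟨z, hzU, hzW⟩ := hj
    exact ⟨g z, hzU, hzW⟩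

theorem isDiscreteFamily_of_le_dist {Y : Type*} [PseudoMetricSpace Y] {U : ι → Set Y} {ε : ℝ}
    (hε : 0 < ε) (hU : ∀ i j, i ≠ j → ∀ u ∈ U i, ∀ v ∈ U j, ε ≤ dist u v) :
    IsDiscreteFamily U := by
  intro x
  refine ⟨Metric.ball x (ε / 2), Metric.ball_mem_nhds x (half_pos hε), ?_⟩
  rintro i ⟨u, hu, hux⟩ j ⟨v, hv, hvx⟩
  by_contra hij
  have huv := hU i j hij u hu v hv
  have := dist_triangle_right u v x
  rw [Metric.mem_ball] at hux hvx
  linarith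

theorem IsSFDFamily.isSFDSetFamily_range {A : ι → Set X} (hA : IsSFDFamily A) :
    IsSFDSetFamily (range A) := by
  obtain ⟨U, hU, hUcozero, hAU⟩ := hA
  choose s hs using fun B : range A => B.2
  have hs_inj : Function.Injective s := fun B B' h => Subtype.ext <| by rw [← hs B, ← hs B', h]
  refine ⟨U ∘ s, hU.comp_injective hs_inj, fun B => hUcozero (s B), fun B => ?_⟩
  change closure (B : Set X) ⊆ U (s B)
  rw [← hs B]
  exact hAU (s B)

end DiscreteFamilies

section StoneBase

open Metric

variable {Y : Type*} [PseudoMetricSpace Y]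

/-- Stage `n` of Stone's σ-discrete refinement of the cover by the balls `ball y a`, with centres
well-ordered by `r`: it is made of the balls `ball x (1/2)^n` around the points `x` not covered at
earlier stages, for which `y` is the `r`-first centre with `x ∈ ball y a`, and which lie deep
inside that ball. -/
noncomputable def stoneCell (r : Y → Y → Prop) (a : ℝ) (n : ℕ) (y : Y) : Set Y :=
  ⋃ x ∈ {x : Y | dist x y ≤ a - 3 * (1 / 2) ^ n ∧ (∀ z, r z y → a ≤ dist x z) ∧
      ∀ j < n, ∀ z, x ∉ stoneCell r a j z}, ball x ((1 / 2) ^ n)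
termination_by n

theorem mem_stoneCell {r : Y → Y → Prop} {a : ℝ} {n : ℕ} {y u : Y} :
    u ∈ stoneCell r a n y ↔ ∃ x : Y, (dist x y ≤ a - 3 * (1 / 2) ^ n ∧
      (∀ z, r z y → a ≤ dist x z) ∧ ∀ j < n, ∀ z, x ∉ stoneCell r a j z) ∧
      dist u x < (1 / 2) ^ n := by
  rw [stoneCell]
  simp only [mem_iUnion, mem_ball, exists_prop]
  rfl

theorem isOpen_stoneCell (r : Y → Y → Prop) (a : ℝ) (n : ℕ) (y : Y) :
    IsOpen (stoneCell r a n y) := by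
  rw [stoneCell]
  exact isOpen_biUnion fun _ _ => isOpen_ball

theorem stoneCell_subset_ball {r : Y → Y → Prop} {a : ℝ} {n : ℕ} {y : Y} :
    stoneCell r a n y ⊆ ball y a := by
  intro u hu
  obtain ⟨x, ⟨hxy, -, -⟩, hux⟩ := mem_stoneCell.1 hu
  have := dist_triangle u x y
  have : (0 : ℝ) < (1 / 2) ^ n := by positivity
  rw [mem_ball]
  linarith

theorem le_dist_of_mem_stoneCell {r : Y → Y → Prop} [Std.Trichotomous r] {a : ℝ} {n : ℕ}
    {y y' u u' : Y} (hyy' : y ≠ y') (hu : u ∈ stoneCell r a n y)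
    (hu' : u' ∈ stoneCell r a n y') : (1 / 2) ^ n ≤ dist u u' := by
  obtain ⟨x, ⟨hxy, hx, -⟩, hux⟩ := mem_stoneCell.1 hu
  obtain ⟨x', ⟨hx'y', hx', -⟩, hux'⟩ := mem_stoneCell.1 hu'
  have hxx' : 3 * (1 / 2 : ℝ) ^ n ≤ dist x x' := by
    rcases trichotomous_of r y y' with hr | rfl | hr
    · have := hx' y hr
      have := dist_triangle_left x' y x
      linarith
    · exact absurd rfl hyy'
    · have := hx y' hr
      have := dist_triangle x x' y'
      linarith
  have := dist_triangle4 x u u' x'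
  rw [dist_comm x u] at this
  linarith

/-- Unless `p` is covered earlier, it is covered at a late enough stage with the `r`-least centre
whose `a`-ball contains it. -/
theorem exists_mem_stoneCell {r : Y → Y → Prop} [IsWellFounded Y r] {a : ℝ} (ha : 0 < a)
    (p : Y) : ∃ n y, p ∈ stoneCell r a n y := by
  have wf : WellFounded r := IsWellFounded.wf
  have hS : {y | dist p y < a}.Nonempty := ⟨p, by simpa using ha⟩
  set y₀ := wf.min {y | dist p y < a} hS
  have hpy₀ : dist p y₀ < a := wf.min_mem _ hS
  have hfirst : ∀ z, r z y₀ → a ≤ dist p z := fun z hz =>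
    not_lt.1 fun hpz => wf.not_lt_min _ hpz hz
  obtain ⟨n, hn⟩ : ∃ n : ℕ, (1 / 2 : ℝ) ^ n < (a - dist p y₀) / 3 :=
    exists_pow_lt_of_lt_one (by linarith) (by norm_num)
  by_cases hearlier : ∃ j < n, ∃ z, p ∈ stoneCell r a j z
  · obtain ⟨j, -, z, hz⟩ := hearlier
    exact ⟨j, z, hz⟩
  · push Not at hearlier
    exact ⟨n, y₀, mem_stoneCell.2 ⟨p, ⟨by linarith, hfirst, hearlier⟩, by simp⟩⟩

theorem isDiscreteFamily_range_stoneCell (r : Y → Y → Prop) [Std.Trichotomous r] (a : ℝ)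
    (n : ℕ) : IsDiscreteFamily fun V : range (stoneCell r a n) => (V : Set Y) := by
  refine isDiscreteFamily_of_le_dist (ε := (1 / 2) ^ n) (by positivity) ?_
  rintro ⟨_, y, rfl⟩ ⟨_, y', rfl⟩ hne u hu v hv
  exact le_dist_of_mem_stoneCell (fun h => hne (by subst h; rfl)) hu hv

theorem exists_isDiscreteFamily_isTopologicalBasis (Y : Type*) [PseudoMetricSpace Y] :
    ∃ 𝒱 : ℕ → Set (Set Y), (∀ m, IsDiscreteFamily fun V : 𝒱 m => (V : Set Y)) ∧
      TopologicalSpace.IsTopologicalBasis (⋃ m, 𝒱 m) := by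
  let r : Y → Y → Prop := WellOrderingRel
  have : IsWellOrder Y r := WellOrderingRel.isWellOrder
  obtain ⟨e, he⟩ := exists_surjective_nat (ℕ × ℕ)
  let 𝒱 : ℕ × ℕ → Set (Set Y) := fun mn => range (stoneCell r ((1 / 2) ^ mn.1) mn.2)
  refine ⟨𝒱 ∘ e, fun m => isDiscreteFamily_range_stoneCell r _ _, ?_⟩
  rw [Function.comp_def, he.iUnion_comp 𝒱]
  refine TopologicalSpace.isTopologicalBasis_of_isOpen_of_nhds ?_ fun p U hpU hU => ?_
  · simp only [mem_iUnion]
    rintro _ ⟨mn, y, rfl⟩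
    exact isOpen_stoneCell r _ _ y
  obtain ⟨ε, hε, hεU⟩ := isOpen_iff.1 hU p hpU
  obtain ⟨m, hm⟩ : ∃ m : ℕ, (1 / 2 : ℝ) ^ m < ε / 2 :=
    exists_pow_lt_of_lt_one (by linarith) (by norm_num)
  obtain ⟨n, y, hpy⟩ := exists_mem_stoneCell (r := r) (by positivity : (0 : ℝ) < (1 / 2) ^ m) p
  refine ⟨_, mem_iUnion.2 ⟨(m, n), y, rfl⟩, hpy, fun q hq => hεU ?_⟩
  have hqy := stoneCell_subset_ball hq
  have hpy := stoneCell_subset_ball hpy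
  have := dist_triangle_right q p y
  rw [mem_ball] at hqy hpy ⊢
  linarith

end StoneBase

section BaireOne

variable {X Y : Type*} [TopologicalSpace Y]

def tailSuperlevelSet (g : ℕ → X → Y) (φ : Y → ℝ) (c : ℝ) (n : ℕ) : Set X :=
  {x | ∀ j ≥ n, c ≤ φ (g j x)}

variable {g : ℕ → X → Y} {φ : Y → ℝ} {c : ℝ} {n : ℕ}

/-- `ℕ → ℝ` is metrizable, so its closed sets are zero sets. -/
theorem isZeroSet_tailSuperlevelSet [TopologicalSpace X] (hg : ∀ n, Continuous (g n))
    (hφ : Continuous φ) :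
    IsZeroSet (tailSuperlevelSet g φ c n) := by
  have hclosed : IsClosed {v : ℕ → ℝ | ∀ j ≥ n, c ≤ v j} := by
    simp only [ofPred_forall]
    exact isClosed_iInter fun j =>
      isClosed_iInter fun _ => isClosed_le continuous_const (continuous_apply j)
  exact hclosed.isZeroSet.preimage (continuous_pi fun j => hφ.comp (hg j))

theorem tailSuperlevelSet_subset_preimage {f : X → Y}
    (hlim : ∀ x, Tendsto (fun j => g j x) atTop (𝓝 (f x))) (hφ : Continuous φ) :
    tailSuperlevelSet g φ c n ⊆ f ⁻¹' {y | c ≤ φ y} := fun x hx =>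
  ge_of_tendsto ((hφ.tendsto (f x)).comp (hlim x)) (eventually_atTop.2 ⟨n, hx⟩)

theorem closure_tailSuperlevelSet_subset [TopologicalSpace X] (hgn : Continuous (g n))
    (hφ : Continuous φ) :
    closure (tailSuperlevelSet g φ c n) ⊆ g n ⁻¹' {y | c ≤ φ y} :=
  closure_minimal (fun _ hx => hx n le_rfl) (isClosed_le continuous_const (hφ.comp hgn))

theorem exists_mem_tailSuperlevelSet {f : X → Y}
    (hlim : ∀ x, Tendsto (fun j => g j x) atTop (𝓝 (f x))) (hφ : Continuous φ) {x : X}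
    (hx : 0 < φ (f x)) : ∃ k n : ℕ, x ∈ tailSuperlevelSet g φ (1 / (k + 1)) n := by
  obtain ⟨k, hk⟩ := exists_nat_one_div_lt hx
  obtain ⟨n, hn⟩ :=
    eventually_atTop.1 (((hφ.tendsto (f x)).comp (hlim x)).eventually (eventually_ge_nhds hk))
  exact ⟨k, n, fun j hj => hn j hj⟩

theorem isSFDFamily_tailSuperlevelSet [TopologicalSpace X] [PerfectlyNormalSpace Y] {ι : Type*}
    {V : ι → Set Y} (hV : IsDiscreteFamily V) {φ : ι → Y → ℝ} (hφ : ∀ i, Continuous (φ i))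
    (hφV : ∀ i, V i = {y | 0 < φ i y}) (hc : 0 < c) (hgn : Continuous (g n)) :
    IsSFDFamily fun i => tailSuperlevelSet g (φ i) c n := by
  refine ⟨fun i => g n ⁻¹' {y | c / 2 < φ i y}, ?_, fun i => ?_, fun i => ?_⟩
  · refine (hV.mono fun i y hy => ?_).preimage hgn
    rw [hφV i]
    exact (half_pos hc).trans hy
  · exact (isOpen_lt continuous_const (hφ i)).isCozeroSet.preimage hgn
  · refine (closure_tailSuperlevelSet_subset hgn (hφ i)).trans fun x hx => ?_
    exact (half_lt_self hc).trans_le hx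

end BaireOne

section SigmaF

variable {X Y : Type*} [TopologicalSpace X] [TopologicalSpace Y]

theorem isBaseFor_of_forall_exists {𝓑 : Set (Set X)} {f : X → Y}
    (h : ∀ V, IsOpen V → ∀ x ∈ f ⁻¹' V, ∃ A ∈ 𝓑, x ∈ A ∧ A ⊆ f ⁻¹' V) : IsBaseFor 𝓑 f := by
  refine fun V hV => ⟨{A ∈ 𝓑 | A ⊆ f ⁻¹' V}, sep_subset _ _, subset_antisymm (fun x hx => ?_) ?_⟩
  · obtain ⟨A, hA𝓑, hxA, hAV⟩ := h V hV x hx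
    exact ⟨A, ⟨hA𝓑, hAV⟩, hxA⟩
  · exact sUnion_subset fun A hA => hA.2

theorem memSigmaF0_of_countable {ι : Type*} [Countable ι] [Nonempty ι] {f : X → Y}
    (𝓑 : ι → Set (Set X)) (hSFD : ∀ i, IsSFDSetFamily (𝓑 i))
    (hzero : ∀ i, ∀ A ∈ 𝓑 i, IsZeroSet A) (hbase : IsBaseFor (⋃ i, 𝓑 i) f) : MemSigmaF0 f := by
  obtain ⟨e, he⟩ := exists_surjective_nat ι
  refine ⟨𝓑 ∘ e, fun n => hSFD (e n), fun n => hzero (e n), ?_⟩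
  rwa [Function.comp_def, he.iUnion_comp 𝓑]

theorem memSigmaF0_of_memB1 [PerfectlyNormalSpace Y] {𝒱 : ℕ → Set (Set Y)}
    (h𝒱 : ∀ m, IsDiscreteFamily fun V : 𝒱 m => (V : Set Y))
    (hbasis : TopologicalSpace.IsTopologicalBasis (⋃ m, 𝒱 m)) {f : X → Y} (hf : MemB1 f) :
    MemSigmaF0 f := by
  obtain ⟨g, hg, hlim⟩ := hf
  choose φ hφ hφV using fun m (V : 𝒱 m) =>
    (hbasis.isOpen (mem_iUnion_of_mem m V.2)).exists_continuous_eq_setOf_pos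
  let 𝓑 : ℕ × ℕ × ℕ → Set (Set X) := fun ⟨m, k, n⟩ =>
    range fun V : 𝒱 m => tailSuperlevelSet g (φ m V) (1 / (k + 1)) n
  refine memSigmaF0_of_countable 𝓑 (fun ⟨m, k, n⟩ => ?_) ?_ ?_
  · exact (isSFDFamily_tailSuperlevelSet (h𝒱 m) (hφ m) (hφV m) Nat.one_div_pos_of_nat
      (hg n)).isSFDSetFamily_range
  · rintro ⟨m, k, n⟩ _ ⟨V, rfl⟩
    exact isZeroSet_tailSuperlevelSet hg (hφ m V)
  refine isBaseFor_of_forall_exists fun W hW x hx => ?_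
  obtain ⟨V, hV𝒱, hxV, hVW⟩ := hbasis.exists_subset_of_mem_open hx hW
  obtain ⟨m, hVm⟩ := mem_iUnion.1 hV𝒱
  have hφx : 0 < φ m ⟨V, hVm⟩ (f x) := (hφV m ⟨V, hVm⟩).subset hxV
  obtain ⟨k, n, hxkn⟩ := exists_mem_tailSuperlevelSet hlim (hφ m ⟨V, hVm⟩) hφx
  refine ⟨_, mem_iUnion.2 ⟨(m, k, n), ⟨V, hVm⟩, rfl⟩, hxkn, fun z hz => hVW ?_⟩
  have hfz : 1 / ((k : ℝ) + 1) ≤ φ m ⟨V, hVm⟩ (f z) :=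
    tailSuperlevelSet_subset_preimage hlim (hφ m ⟨V, hVm⟩) hz
  exact (hφV m ⟨V, hVm⟩).superset (Nat.one_div_pos_of_nat.trans_le hfz)

end SigmaF

theorem stmt8 {X Y : Type*} [TopologicalSpace X] [TopologicalSpace Y]
    [TopologicalSpace.MetrizableSpace Y] (f : X → Y) (hf : MemB1 f) :
    MemSigmaF0 f := by
  let := TopologicalSpace.pseudoMetrizableSpacePseudoMetric Y
  obtain ⟨𝒱, h𝒱, hbasis⟩ := exists_isDiscreteFamily_isTopologicalBasis Y
  exact memSigmaF0_of_memB1 h𝒱 hbasis hf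
end

section
/- Let X be the space of irrational numbers with the Euclidean topology and Y the set of irrational numbers with the topology inherited from the Sorgenfrey line. Fix an enumeration Q = {q_n : n ∈ ℕ} of a countable dense subset of X, and define f : X → Y by f(q_n) = q_n − 1/n and f(x) = x for x ∉ Q. Then the preimage under f of every open subset of Y is an F_σ-set in X, but f is not a pointwise limit of any sequence of continuous maps from X to Y. -/
open Set Filter Topology

noncomputable def sorgenfreyIrr : TopologicalSpace {x : ℝ // Irrational x} :=
  TopologicalSpace.induced Subtype.val
    (TopologicalSpace.generateFrom {s : Set ℝ | ∃ a b : ℝ, s = Set.Ico a b})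

/-!
A Sorgenfrey-open set `V` is its Euclidean interior plus countably many points, and `f` moves only
the points `q n`, by `1 / (n + 1) → 0`. Hence `f ⁻¹' (interior V)` is a countable union of closed
sets (points at distance `≥ 1 / (m + 1)` from the complement of `interior V`, kept away from the
finitely many `q j` that move further than that) plus countably many points `q n`.

If continuous maps `g m` converged to `f` in the Sorgenfrey topology, the Euclidean-closed sets
`H n = {x | x ≤ g m x for all m ≥ n}` would cover every point outside the range of `q`, while no
`q k` lies in any of them, as `g m (q k)` eventually lies in `[f (q k), q k)`. By Baire category,
some `H n` has nonempty interior, which meets the dense sequence `q`.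
-/

theorem exists_isClosed_eq_iUnion_of_isGδ_compl {X : Type*} [TopologicalSpace X] {s : Set X}
    (h : IsGδ sᶜ) : ∃ F : ℕ → Set X, (∀ n, IsClosed (F n)) ∧ s = ⋃ n, F n := by
  obtain ⟨U, hU, hs⟩ := isGδ_iff_eq_iInter_nat.1 h
  exact ⟨fun n => (U n)ᶜ, fun n => (hU n).isClosed_compl, by rw [← compl_iInter, ← hs, compl_compl]⟩

theorem isGδ_compl_preimage_of_tendsto_dist {X : Type*} [MetricSpace X] {f : X → X}
    {q : ℕ → X} (hfix : ∀ x ∉ range q, f x = x)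
    (hq : Tendsto (fun n => dist (f (q n)) (q n)) atTop (𝓝 0)) {W : Set X} (hW : IsOpen W) :
    IsGδ (f ⁻¹' W)ᶜ := by
  have hr : ∀ m : ℕ, (0 : ℝ) < 1 / (m + 1) := fun m => Nat.one_div_pos_of_nat
  choose N hN using fun m => eventually_atTop.1 (hq.eventually (gt_mem_nhds (hr m)))
  -- Every `q n` with `n ≥ N m` is moved by less than `1 / (m + 1)`; the balls keep out the others.
  set T : ℕ × ℕ → Set X := fun mk =>
    (Metric.thickening (1 / (mk.1 + 1)) Wᶜ)ᶜ ∩ ⋂ j < N mk.1, (Metric.ball (q j) (1 / (mk.2 + 1)))ᶜ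
  have hT_closed : ∀ mk, IsClosed (T mk) := fun mk =>
    Metric.isOpen_thickening.isClosed_compl.inter
      (isClosed_biInter fun j _ => Metric.isOpen_ball.isClosed_compl)
  have hT_sub : ∀ mk, T mk ⊆ f ⁻¹' W := by
    rintro ⟨m, k⟩ x ⟨hxW, hxq⟩
    by_contra hfx
    by_cases hx : x ∈ range q
    · obtain ⟨n, rfl⟩ := hx
      have hn : N m ≤ n := by
        by_contra! hn
        exact mem_iInter₂.1 hxq n hn (Metric.mem_ball_self (hr k))
      exact hxW (Metric.mem_thickening_iff.2 ⟨_, hfx, by rw [dist_comm]; exact hN m n hn⟩)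
    · rw [mem_preimage, hfix x hx] at hfx
      exact hxW (Metric.self_subset_thickening (hr m) _ hfx)
  have hcover : f ⁻¹' W ⊆ (⋃ mk, T mk) ∪ (f ⁻¹' W ∩ range q) := by
    intro x hx
    by_cases hxq : x ∈ range q
    · exact Or.inr ⟨hx, hxq⟩
    rw [mem_preimage, hfix x hxq] at hx
    obtain ⟨ε, hε, hball⟩ := Metric.isOpen_iff.1 hW x hx
    obtain ⟨m, hm⟩ := exists_nat_one_div_lt hε
    have hfar : ∀ j ∈ Iio (N m), ∀ᶠ k : ℕ in atTop, 1 / ((k : ℝ) + 1) ≤ dist x (q j) :=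
      fun j _ => tendsto_one_div_add_atTop_nhds_zero_nat.eventually
        (ge_mem_nhds (dist_pos.2 fun h => hxq ⟨j, h.symm⟩))
    obtain ⟨k, hk⟩ := ((eventually_all_finite (finite_Iio _)).2 hfar).exists
    refine Or.inl (mem_iUnion.2 ⟨(m, k), ?_, mem_iInter₂.2 fun j hj => ?_⟩)
    · rintro hx'
      obtain ⟨z, hzW, hz⟩ := Metric.mem_thickening_iff.1 hx'
      exact hzW (hball (by rw [Metric.mem_ball, dist_comm]; exact hz.trans hm))
    · exact fun hxj => (hk j hj).not_gt (Metric.mem_ball.1 hxj)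
  have hcount : (f ⁻¹' W ∩ range q).Countable := (countable_range q).mono inter_subset_right
  have heq : f ⁻¹' W = (⋃ mk, T mk) ∪ (f ⁻¹' W ∩ range q) :=
    hcover.antisymm (union_subset (iUnion_subset hT_sub) inter_subset_left)
  rw [heq, compl_union, compl_iUnion]
  exact (IsGδ.iInter_of_isOpen fun mk => (hT_closed mk).isOpen_compl).inter hcount.isGδ_compl

theorem exists_apply_mem_of_compl_range_subset_iUnion {X : Type*} [TopologicalSpace X]
    [T1Space X] [BaireSpace X] [∀ x : X, (𝓝[≠] x).NeBot] {q : ℕ → X} (hd : DenseRange q)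
    {H : ℕ → Set X} (hH : ∀ n, IsClosed (H n)) (hcov : (range q)ᶜ ⊆ ⋃ n, H n) :
    ∃ n k, q k ∈ H n := by
  have : Nonempty X := ⟨q 0⟩
  set C : ℕ ⊕ ℕ → Set X := Sum.elim H fun k => {q k}
  have hC : ⋃ i, C i = univ := by
    refine eq_univ_of_forall fun x => ?_
    by_cases hx : x ∈ range q
    · obtain ⟨k, rfl⟩ := hx
      exact mem_iUnion.2 ⟨.inr k, rfl⟩
    · obtain ⟨n, hn⟩ := mem_iUnion.1 (hcov hx)
      exact mem_iUnion.2 ⟨.inl n, hn⟩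
  have hC_closed : ∀ i, IsClosed (C i) := Sum.forall.2 ⟨hH, fun _ => isClosed_singleton⟩
  obtain ⟨i | k, hi⟩ := nonempty_interior_of_iUnion_of_closed hC_closed hC
  · obtain ⟨k, hk⟩ := hd.exists_mem_open isOpen_interior hi
    exact ⟨i, k, interior_subset hk⟩
  · simp [C, interior_singleton] at hi

local notation "𝕀" => {x : ℝ // Irrational x}

def sorgenfreyLine : TopologicalSpace ℝ :=
  TopologicalSpace.generateFrom {s : Set ℝ | ∃ a b : ℝ, s = Ico a b}

theorem isOpen_sorgenfreyLine_Ico (a b : ℝ) : IsOpen[sorgenfreyLine] (Ico a b) :=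
  .basic _ ⟨a, b, rfl⟩

theorem exists_Ico_subset_of_isOpen_sorgenfreyLine {W : Set ℝ} (hW : IsOpen[sorgenfreyLine] W) :
    ∀ x ∈ W, ∃ b, x < b ∧ Ico x b ⊆ W := by
  induction hW with
  | basic s hs =>
    obtain ⟨a, b, rfl⟩ := hs
    exact fun x hx => ⟨b, hx.2, Ico_subset_Ico_left hx.1⟩
  | univ => exact fun x _ => ⟨x + 1, lt_add_one x, subset_univ _⟩
  | inter s t _ _ ihs iht =>
    intro x hx
    obtain ⟨b, hxb, hb⟩ := ihs x hx.1
    obtain ⟨c, hxc, hc⟩ := iht x hx.2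
    exact ⟨min b c, lt_min hxb hxc, subset_inter
      ((Ico_subset_Ico_right (min_le_left b c)).trans hb)
      ((Ico_subset_Ico_right (min_le_right b c)).trans hc)⟩
  | sUnion S _ ih =>
    rintro x ⟨s, hsS, hxs⟩
    obtain ⟨b, hxb, hb⟩ := ih s hsS x hxs
    exact ⟨b, hxb, hb.trans (subset_sUnion_of_mem hsS)⟩

theorem sorgenfreyLine_le : sorgenfreyLine ≤ (inferInstance : TopologicalSpace ℝ) := by
  intro U hU
  rw [@isOpen_iff_forall_mem_open _ sorgenfreyLine]
  intro x hx
  obtain ⟨b, hxb, hb⟩ := exists_Ico_subset_of_mem_nhds (hU.mem_nhds hx) ⟨x + 1, lt_add_one x⟩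
  exact ⟨Ico x b, hb, isOpen_sorgenfreyLine_Ico x b, left_mem_Ico.2 hxb⟩

/-- The intervals `(x, b x)`, with `[x, b x) ⊆ W`, attached to the points `x` of `W \ interior W`
are pairwise disjoint. -/
theorem countable_diff_interior_of_isOpen_sorgenfreyLine {W : Set ℝ}
    (hW : IsOpen[sorgenfreyLine] W) : (W \ interior W).Countable := by
  choose! b hxb hb using exists_Ico_subset_of_isOpen_sorgenfreyLine hW
  have hinterior : ∀ x ∈ W, Ioo x (b x) ⊆ interior W := fun x hx =>
    isOpen_Ioo.subset_interior_iff.2 (Ioo_subset_Ico_self.trans (hb x hx))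
  have hdisj : ∀ x ∈ W \ interior W, ∀ y ∈ W \ interior W, x < y →
      Disjoint (Ioo x (b x)) (Ioo y (b y)) := by
    intro x hx y hy hxy
    refine Set.disjoint_left.2 fun z hzx hzy => hy.2 (hinterior x hx.1 ⟨hxy, ?_⟩)
    exact hzy.1.trans hzx.2
  refine Set.PairwiseDisjoint.countable_of_isOpen (s := fun x => Ioo x (b x))
    (fun x hx y hy hne => ?_) (fun _ _ => isOpen_Ioo) (fun x hx => nonempty_Ioo.2 (hxb x hx.1))
  rcases hne.lt_or_gt with h | h
  exacts [hdisj x hx y hy h, (hdisj y hy x hx h).symm]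

theorem sorgenfreyIrr_le : sorgenfreyIrr ≤ (inferInstance : TopologicalSpace 𝕀) :=
  induced_mono sorgenfreyLine_le

theorem countable_diff_interior_of_isOpen_sorgenfreyIrr {V : Set 𝕀}
    (hV : IsOpen[sorgenfreyIrr] V) : (V \ interior V).Countable := by
  obtain ⟨W, hW, rfl⟩ := hV
  refine ((countable_diff_interior_of_isOpen_sorgenfreyLine hW).preimage
    Subtype.val_injective).mono fun x hx => ?_
  exact ⟨hx.1, fun hxW =>
    hx.2 (preimage_interior_subset_interior_preimage continuous_subtype_val hxW)⟩

theorem eventually_mem_Ico_of_tendsto_sorgenfreyIrr {α : Type*} {l : Filter α} {u : α → 𝕀}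
    {y : 𝕀} (hu : Tendsto u l (@nhds _ sorgenfreyIrr y)) {b : ℝ} (hb : (y : ℝ) < b) :
    ∀ᶠ i in l, (u i : ℝ) ∈ Ico (y : ℝ) b :=
  hu.eventually (@IsOpen.mem_nhds _ sorgenfreyIrr _ _
    ⟨_, isOpen_sorgenfreyLine_Ico _ b, rfl⟩ ⟨le_rfl, hb⟩)

theorem isGδ_compl_preimage_of_isOpen_sorgenfreyIrr {f : 𝕀 → 𝕀} {q : ℕ → 𝕀}
    (hfix : ∀ x ∉ range q, f x = x) (hq : Tendsto (fun n => dist (f (q n)) (q n)) atTop (𝓝 0))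
    {V : Set 𝕀} (hV : IsOpen[sorgenfreyIrr] V) : IsGδ (f ⁻¹' V)ᶜ := by
  have hsplit : f ⁻¹' V = f ⁻¹' interior V ∪ f ⁻¹' (V \ interior V) := by
    rw [← preimage_union, union_sdiff_cancel interior_subset]
  have hcount : (f ⁻¹' (V \ interior V)).Countable := by
    refine ((countable_diff_interior_of_isOpen_sorgenfreyIrr hV).union (countable_range q)).mono
      fun x hx => ?_
    by_cases hxq : x ∈ range q
    · exact Or.inr hxq
    · exact Or.inl (hfix x hxq ▸ hx)
  rw [hsplit, compl_union]
  exact (isGδ_compl_preimage_of_tendsto_dist hfix hq isOpen_interior).inter hcount.isGδ_compl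

theorem not_exists_continuous_tendsto_sorgenfreyIrr {q : ℕ → 𝕀} (hd : DenseRange q)
    {f : 𝕀 → 𝕀} (hfq : ∀ n, (f (q n) : ℝ) < q n) (hfix : ∀ x ∉ range q, f x = x) :
    ¬ ∃ g : ℕ → 𝕀 → 𝕀, (∀ n, Continuous[_, sorgenfreyIrr] (g n)) ∧
      ∀ x, Tendsto (fun n => g n x) atTop (@nhds _ sorgenfreyIrr (f x)) := by
  rintro ⟨g, hg, hgf⟩
  have : BaireSpace 𝕀 := IsGδ.setOfPred_irrational.baireSpace_of_dense dense_irrational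
  have (x : 𝕀) : (𝓝[≠] x).NeBot := (nhdsLT_neBot x).mono (nhdsWithin_mono _ fun _ h => ne_of_lt h)
  have hg_real : ∀ n, Continuous fun x => (g n x : ℝ) := fun n =>
    continuous_subtype_val.comp (continuous_le_rng sorgenfreyIrr_le (hg n))
  set H : ℕ → Set 𝕀 := fun n => ⋂ m ≥ n, {x | (x : ℝ) ≤ g m x}
  have hH : ∀ n, IsClosed (H n) := fun n =>
    isClosed_biInter fun m _ => isClosed_le continuous_subtype_val (hg_real m)
  have hcov : (range q)ᶜ ⊆ ⋃ n, H n := by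
    intro x hx
    have hev := eventually_mem_Ico_of_tendsto_sorgenfreyIrr (hgf x) (lt_add_one (f x : ℝ))
    rw [hfix x hx] at hev
    obtain ⟨n, hn⟩ := eventually_atTop.1 hev
    exact mem_iUnion.2 ⟨n, mem_iInter₂.2 fun m hm => (hn m hm).1⟩
  obtain ⟨n, k, hk⟩ := exists_apply_mem_of_compl_range_subset_iUnion hd hH hcov
  obtain ⟨m, hm⟩ :=
    eventually_atTop.1 (eventually_mem_Ico_of_tendsto_sorgenfreyIrr (hgf (q k)) (hfq k))
  exact (mem_iInter₂.1 hk (max n m) (le_max_left _ _)).not_gt (hm _ (le_max_right _ _)).2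

theorem stmt13_general (q : ℕ → {x : ℝ // Irrational x})
    (hd : DenseRange q) (f : {x : ℝ // Irrational x} → {x : ℝ // Irrational x})
    (hf1 : ∀ n : ℕ, (f (q n) : ℝ) = (q n : ℝ) - 1 / (n + 1))
    (hf2 : ∀ x, x ∉ Set.range q → f x = x) :
    (∀ V : Set {x : ℝ // Irrational x}, IsOpen[sorgenfreyIrr] V →
      ∃ F : ℕ → Set {x : ℝ // Irrational x}, (∀ n, IsClosed (F n)) ∧
        f ⁻¹' V = ⋃ n, F n) ∧
    ¬ ∃ g : ℕ → {x : ℝ // Irrational x} → {x : ℝ // Irrational x},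
        (∀ n, Continuous[instTopologicalSpaceSubtype, sorgenfreyIrr] (g n)) ∧
        ∀ x, Filter.Tendsto (fun n => g n x) Filter.atTop (@nhds _ sorgenfreyIrr (f x)) := by
  have hdist : ∀ n : ℕ, dist (f (q n)) (q n) = 1 / (n + 1) := fun n => by
    rw [Subtype.dist_eq, Real.dist_eq, hf1, sub_sub_cancel_left, abs_neg,
      abs_of_pos Nat.one_div_pos_of_nat]
  have hfq : ∀ n, (f (q n) : ℝ) < q n := fun n => by
    rw [hf1]
    exact sub_lt_self _ Nat.one_div_pos_of_nat
  refine ⟨fun V hV => exists_isClosed_eq_iUnion_of_isGδ_compl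
    (isGδ_compl_preimage_of_isOpen_sorgenfreyIrr hf2 ?_ hV),
    not_exists_continuous_tendsto_sorgenfreyIrr hd hfq hf2⟩
  simpa only [hdist] using tendsto_one_div_add_atTop_nhds_zero_nat

theorem stmt13 (q : ℕ → {x : ℝ // Irrational x}) (hq : Function.Injective q)
    (hd : DenseRange q) (f : {x : ℝ // Irrational x} → {x : ℝ // Irrational x})
    (hf1 : ∀ n : ℕ, (f (q n) : ℝ) = (q n : ℝ) - 1 / (n + 1))
    (hf2 : ∀ x, x ∉ Set.range q → f x = x) :
    (∀ V : Set {x : ℝ // Irrational x}, IsOpen[sorgenfreyIrr] V →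
      ∃ F : ℕ → Set {x : ℝ // Irrational x}, (∀ n, IsClosed (F n)) ∧
        f ⁻¹' V = ⋃ n, F n) ∧
    ¬ ∃ g : ℕ → {x : ℝ // Irrational x} → {x : ℝ // Irrational x},
        (∀ n, Continuous[instTopologicalSpaceSubtype, sorgenfreyIrr] (g n)) ∧
        ∀ x, Filter.Tendsto (fun n => g n x) Filter.atTop (@nhds _ sorgenfreyIrr (f x)) :=
  stmt13_general q hd f hf1 hf2
end

section
/- Let X be a topological space and Y a disconnected topological space such that every map in K₁(X,Y) ∩ Σ^f(X,Y) belongs to B₁(X,Y). Then X is almost strongly zero-dimensional, i.e., every zero subset of X is a countable union of C-sets. -/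
open Set Filter Topology

/-!
Pick `a ∈ U` and `b ∉ U` for a clopen `U ⊆ Y`. For a zero set `A ⊆ X`, the map `f` equal to `a`
on `A` and to `b` off `A` has the finite base `{A, Aᶜ}` of functionally `F_σ` sets, so
`f ∈ K₁ ∩ Σ^f`, hence `f = lim gₙ` pointwise with `gₙ` continuous. As `U` is clopen,
`A = f ⁻¹' U = ⋃ₙ ⋂_{k ≥ n} gₖ ⁻¹' U`, a countable union of C-sets.
-/

section ZeroSets

variable {X : Type*} [TopologicalSpace X]

theorem isZeroSet_empty : IsZeroSet (∅ : Set X) :=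
  ⟨fun _ => 1, continuous_const, by simp⟩

theorem isZeroSet_setOf_le {g h : X → ℝ} (hg : Continuous g) (hh : Continuous h) :
    IsZeroSet {x | g x ≤ h x} :=
  ⟨fun x => max (g x - h x) 0, by fun_prop, by ext x; simp⟩

theorem IsZeroSet.union {A B : Set X} (hA : IsZeroSet A) (hB : IsZeroSet B) :
    IsZeroSet (A ∪ B) := by
  obtain ⟨f, hf, rfl⟩ := hA
  obtain ⟨g, hg, rfl⟩ := hB
  exact ⟨f * g, hf.mul hg, by ext x; simp⟩

theorem IsZeroSet.functionallyFSigma {A : Set X} (hA : IsZeroSet A) : FunctionallyFSigma A :=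
  ⟨fun _ => A, fun _ => hA, iUnion_const A |>.symm⟩

theorem IsZeroSet.functionallyFSigma_compl {A : Set X} (hA : IsZeroSet A) :
    FunctionallyFSigma Aᶜ := by
  obtain ⟨g, hg, rfl⟩ := hA
  refine ⟨fun n => {x | 1 / ((n : ℝ) + 1) ≤ |g x|},
    fun n => isZeroSet_setOf_le continuous_const hg.abs, ?_⟩
  ext x
  simp only [mem_compl_iff, mem_preimage, mem_singleton_iff, mem_iUnion, mem_ofPred_eq]
  constructor
  · intro hx
    obtain ⟨n, hn⟩ := exists_nat_one_div_lt (abs_pos.mpr hx)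
    exact ⟨n, hn.le⟩
  · rintro ⟨n, hn⟩ hx
    rw [hx, abs_zero] at hn
    exact (Nat.one_div_pos_of_nat.trans_le hn).false

theorem FunctionallyFSigma.union {A B : Set X} (hA : FunctionallyFSigma A)
    (hB : FunctionallyFSigma B) : FunctionallyFSigma (A ∪ B) := by
  obtain ⟨F, hF, rfl⟩ := hA
  obtain ⟨G, hG, rfl⟩ := hB
  exact ⟨fun n => F n ∪ G n, fun n => (hF n).union (hG n), (iUnion_union_distrib F G).symm⟩

theorem FunctionallyFSigma.sUnion {𝓢 : Set (Set X)} (h𝓢 : 𝓢.Finite)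
    (h : ∀ S ∈ 𝓢, FunctionallyFSigma S) : FunctionallyFSigma (⋃₀ 𝓢) := by
  induction 𝓢, h𝓢 using Set.Finite.induction_on with
  | empty => simpa using isZeroSet_empty.functionallyFSigma
  | @insert S 𝓢 _ _ ih =>
    rw [sUnion_insert]
    exact (h S (mem_insert S 𝓢)).union (ih fun T hT => h T (mem_insert_of_mem S hT))

end ZeroSets

section Bases

variable {X Y : Type*} [TopologicalSpace X] [TopologicalSpace Y]

theorem isSFDSetFamily_singleton (S : Set X) : IsSFDSetFamily ({S} : Set (Set X)) := by
  refine ⟨fun _ => univ, fun x => ⟨univ, univ_mem, fun i _ j _ => ?_⟩,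
    fun _ => ⟨fun _ => 1, continuous_const, by simp⟩, fun _ => subset_univ _⟩
  exact Subtype.ext (i.2.trans j.2.symm)

theorem IsBaseFor.mono {𝓑 𝓒 : Set (Set X)} {f : X → Y} (hf : IsBaseFor 𝓑 f) (h : 𝓑 ⊆ 𝓒) :
    IsBaseFor 𝓒 f := fun V hV =>
  let ⟨𝓢, h𝓢, hV⟩ := hf V hV
  ⟨𝓢, h𝓢.trans h, hV⟩

theorem isBaseFor_of_forall_eq_on {𝓑 : Set (Set X)} {f : X → Y}
    (hcover : ∀ x, ∃ B ∈ 𝓑, x ∈ B) (hconst : ∀ B ∈ 𝓑, ∀ x ∈ B, ∀ y ∈ B, f x = f y) :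
    IsBaseFor 𝓑 f := by
  refine fun V _ => ⟨{B ∈ 𝓑 | B ⊆ f ⁻¹' V}, fun B hB => hB.1, ?_⟩
  refine Subset.antisymm (fun x hx => ?_) (sUnion_subset fun B hB => hB.2)
  obtain ⟨B, hB, hxB⟩ := hcover x
  refine ⟨B, ⟨hB, fun y hy => ?_⟩, hxB⟩
  rw [mem_preimage, hconst B hB y hy x hxB]
  exact hx

theorem memSigmaF_of_countable {𝓑 : Set (Set X)} {f : X → Y} (h𝓑 : 𝓑.Countable)
    (hf : IsBaseFor 𝓑 f) : MemSigmaF f := by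
  obtain ⟨S, hS⟩ := countable_iff_exists_subset_range.mp h𝓑
  refine ⟨fun n => {S n}, fun n => isSFDSetFamily_singleton (S n), hf.mono ?_⟩
  rwa [iUnion_singleton_eq_range]

theorem memK1_of_finite {𝓑 : Set (Set X)} {f : X → Y} (h𝓑 : 𝓑.Finite)
    (hB : ∀ B ∈ 𝓑, FunctionallyFSigma B) (hf : IsBaseFor 𝓑 f) : MemK1 f := by
  intro V hV
  obtain ⟨𝓢, h𝓢, hV⟩ := hf V hV
  rw [hV]
  exact FunctionallyFSigma.sUnion (h𝓑.subset h𝓢) fun S hS => hB S (h𝓢 hS)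

end Bases

/-- `x ∈ f ⁻¹' U` iff `g n x ∈ U` for all large `n`, since `U` is clopen. -/
theorem IsClopen.isCSigmaSet_preimage_of_tendsto {X Y : Type*} [TopologicalSpace X]
    [TopologicalSpace Y] {U : Set Y} (hU : IsClopen U) {f : X → Y} {g : ℕ → X → Y}
    (hg : ∀ n, Continuous (g n)) (hlim : ∀ x, Tendsto (fun n => g n x) atTop (𝓝 (f x))) :
    IsCSigmaSet (f ⁻¹' U) := by
  refine ⟨fun n => ⋂ k, g (n + k) ⁻¹' U,
    fun n => ⟨fun k => g (n + k) ⁻¹' U, fun k => hU.preimage (hg (n + k)), rfl⟩, ?_⟩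
  ext x
  have hev : f x ∈ U ↔ ∀ᶠ n in atTop, g n x ∈ U :=
    ⟨fun hx => hlim x |>.eventually (hU.isOpen.mem_nhds hx),
      hU.isClosed.mem_of_tendsto (hlim x)⟩
  simp only [mem_preimage, hev, eventually_atTop, mem_iUnion, mem_iInter]
  constructor
  · rintro ⟨N, hN⟩
    exact ⟨N, fun k => hN (N + k) (Nat.le_add_right N k)⟩
  · rintro ⟨N, hN⟩
    exact ⟨N, fun k hk => Nat.add_sub_cancel' hk ▸ hN (k - N)⟩

theorem stmt14 {X Y : Type*} [TopologicalSpace X] [TopologicalSpace Y]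
    (hY : ∃ U V : Set Y, IsClopen U ∧ IsClopen V ∧ U.Nonempty ∧ V.Nonempty ∧
      Disjoint U V ∧ U ∪ V = Set.univ)
    (h : ∀ f : X → Y, MemK1 f → MemSigmaF f → MemB1 f) :
    AlmostStronglyZeroDimensional X := by
  classical
  obtain ⟨U, V, hU, -, ⟨a, haU⟩, ⟨b, hbV⟩, hUV, -⟩ := hY
  have hbU : b ∉ U := hUV.notMem_of_mem_right hbV
  intro A hA
  set f : X → Y := fun x => if x ∈ A then a else b
  have hbase : IsBaseFor {A, Aᶜ} f := by
    refine isBaseFor_of_forall_eq_on (fun x => ?_) ?_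
    · by_cases hx : x ∈ A
      exacts [⟨A, mem_insert _ _, hx⟩, ⟨Aᶜ, mem_insert_of_mem _ rfl, hx⟩]
    · rintro B (rfl | rfl) x hx y hy <;> simp_all [f]
  have hK1 : MemK1 f := memK1_of_finite (toFinite _)
    (by rintro B (rfl | rfl); exacts [hA.functionallyFSigma, hA.functionallyFSigma_compl]) hbase
  obtain ⟨g, hg, hlim⟩ := h f hK1 (memSigmaF_of_countable (toFinite _).countable hbase)
  have hfU : f ⁻¹' U = A := by
    ext x
    by_cases hx : x ∈ A <;> simp [f, hx, haU, hbU]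
  exact hfU ▸ hU.isCSigmaSet_preimage_of_tendsto hg hlim
end
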